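/- arXiv:2409.05568 — 2 statements merged into one kernel-verified Lean document; each statement's English description precedes it below -/
import Mathlib

section
/- Every functor from a category M to the arrow category [1] = {0 < 1} is an exponentiable functor; consequently the slice category Cat/[1] is cartesian closed. -/
/-!
For `φ : M ⥤ [1]` and `N` over `[1]` the exponential `N^M` over `[1]` can be written down by
hand. Its fibre over `i` is the category of functors `Mᵢ ⥤ N` landing over `i`, and a morphism
from `F` over `i` to `G` over `j` is a family `M(a, b) → N(F a, G b)`, natural in `a ∈ Mᵢ` and
`b ∈ Mⱼ`. Composition is well defined because in every composable pair `i ⟶ j ⟶ k` of `[1]`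
one of the two arrows is an identity, so every arrow of `M` from `Mᵢ` to `Mₖ` factors through
`Mⱼ`. Currying shows that `N ↦ N^M` is right adjoint to the strict pullback along `φ`. That pullback
is the product with `φ` in `Cat/[1]`, so this gives both the exponentiability of `φ` and, for
all `φ` at once, the cartesian closedness of `Cat/[1]`.
-/

open CategoryTheory Limits

universe u

/-- A functor `φ : D ⥤ C` (a morphism of `Cat`) is exponentiable (an
exponential fibration) if the pullback functor
`D ×_C (−) : Cat/C ⥤ Cat/C` admits a right adjoint. -/
def CatExponentiable {D C : Cat.{u, u}} (φ : D ⟶ C) : Prop :=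
  (Over.pullback φ ⋙ Over.map φ).IsLeftAdjoint

/-- The walking arrow `[1]`, as an object of `Cat`. -/
def walkingArrowCat : Cat.{u, u} := Cat.of (ULift.{u} (Fin 2))

noncomputable instance : CartesianMonoidalCategory (Over walkingArrowCat.{u}) :=
  CartesianMonoidalCategory.ofHasFiniteProducts

open MonoidalCategory

namespace CategoryTheory.CartesianMonoidalCategory

variable {D : Type*} [Category D] [CartesianMonoidalCategory D]

noncomputable def isoTensorLeftOfIsLimit {Z : D} {H : D ⥤ D}
    (p : H ⟶ (Functor.const D).obj Z) (q : H ⟶ 𝟭 D)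
    (hpq : ∀ X, IsLimit (BinaryFan.mk (p.app X) (q.app X))) : H ≅ tensorLeft Z :=
  NatIso.ofComponents (fun X => (hpq X).conePointUniqueUpToIso (tensorProductIsBinaryProduct Z X))
    fun f => by
      have hfst X : ((hpq X).conePointUniqueUpToIso (tensorProductIsBinaryProduct Z X)).hom ≫
          fst Z X = p.app X :=
        (hpq X).conePointUniqueUpToIso_hom_comp _ ⟨.left⟩
      have hsnd X : ((hpq X).conePointUniqueUpToIso (tensorProductIsBinaryProduct Z X)).hom ≫
          snd Z X = q.app X :=
        (hpq X).conePointUniqueUpToIso_hom_comp _ ⟨.right⟩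
      apply hom_ext
      · simp [hfst]
      · simp [hsnd, reassoc_of% hsnd]

end CategoryTheory.CartesianMonoidalCategory

namespace CategoryTheory.Over

noncomputable section

variable {C : Type*} [Category C] {X Y : C} (f : Y ⟶ X) [HasPullbacksAlong f]

def pullbackMapFst : Over.pullback f ⋙ Over.map f ⟶ (Functor.const _).obj (Over.mk f) where
  app A := Over.homMk (pullback.snd A.hom f)
  naturality _ _ _ := by ext; simp; exact pullback.lift_snd _ _ _

def pullbackMapSnd : Over.pullback f ⋙ Over.map f ⟶ 𝟭 (Over X) where
  app A := Over.homMk (pullback.fst A.hom f) pullback.condition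
  naturality _ _ _ := by ext; simp; exact pullback.lift_fst _ _ _

def isLimitPullbackMapFan (A : Over X) :
    IsLimit (BinaryFan.mk ((pullbackMapFst f).app A) ((pullbackMapSnd f).app A)) :=
  IsLimit.pullbackConeEquivBinaryFanFunctor (PullbackCone.flipIsLimit (pullbackIsPullback _ _))

def pullbackMapIsoTensorLeft [CartesianMonoidalCategory (Over X)] :
    Over.pullback f ⋙ Over.map f ≅ tensorLeft (Over.mk f) :=
  CartesianMonoidalCategory.isoTensorLeftOfIsLimit _ _ (isLimitPullbackMapFan f)

end

theorem w_toFunctor_obj {B : Cat} {X Y : Over B} (f : X ⟶ Y) (x : X.left) :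
    Y.hom.toFunctor.obj (f.left.toFunctor.obj x) = X.hom.toFunctor.obj x :=
  Functor.congr_obj congr(($(Over.w f)).toFunctor) x

end CategoryTheory.Over

namespace CategoryTheory.SliceOverArrow

instance (i j : walkingArrowCat.{u}) : Subsingleton (i ⟶ j) :=
  ⟨fun ⟨⟨_⟩⟩ ⟨⟨_⟩⟩ => rfl⟩

instance : DecidableEq walkingArrowCat.{u} :=
  inferInstanceAs (DecidableEq (ULift (Fin 2)))

theorem functor_ext_of_obj_eq {C : Type*} [Category C] {F G : C ⥤ walkingArrowCat.{u}}
    (h : ∀ X, F.obj X = G.obj X) : F = G :=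
  Functor.ext h fun _ _ _ => Subsingleton.elim _ _

theorem eq_or_eq_of_hom {i j k : walkingArrowCat.{u}} (f : i ⟶ j) (g : j ⟶ k) :
    i = j ∨ j = k := by
  obtain ⟨⟨hij : i.down ≤ j.down⟩⟩ := f
  obtain ⟨⟨hjk : j.down ≤ k.down⟩⟩ := g
  have : i.down = j.down ∨ j.down = k.down := by omega
  exact this.imp (ULift.ext _ _) (ULift.ext _ _)

section StrictPullback

variable {A B : Type*} [Category A] [Category B]

/-- Since `[1]` is thin, this full subcategory of `A × B` is the pullback in `Cat`. -/
abbrev StrictPullback (F : A ⥤ walkingArrowCat.{u}) (G : B ⥤ walkingArrowCat.{u}) :=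
  ObjectProperty.FullSubcategory fun p : A × B => F.obj p.1 = G.obj p.2

variable {F : A ⥤ walkingArrowCat.{u}} {G : B ⥤ walkingArrowCat.{u}}

theorem StrictPullback.functor_ext {C : Type*} [Category C] {L L' : C ⥤ StrictPullback F G}
    (h₁ : L ⋙ ObjectProperty.ι _ ⋙ Prod.fst A B = L' ⋙ ObjectProperty.ι _ ⋙ Prod.fst A B)
    (h₂ : L ⋙ ObjectProperty.ι _ ⋙ Prod.snd A B = L' ⋙ ObjectProperty.ι _ ⋙ Prod.snd A B) :
    L = L' := by
  refine Functor.ext (fun t => ObjectProperty.FullSubcategory.ext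
    (Prod.ext (Functor.congr_obj h₁ t) (Functor.congr_obj h₂ t))) fun t t' k => ?_
  refine ObjectProperty.hom_ext _ (Prod.ext ?_ ?_)
  · simpa using Functor.congr_hom h₁ k
  · simpa using Functor.congr_hom h₂ k

def StrictPullback.mapRight {B' : Type*} [Category B'] {G' : B' ⥤ walkingArrowCat.{u}}
    (k : B ⥤ B') (hk : ∀ b, G'.obj (k.obj b) = G.obj b) :
    StrictPullback F G ⥤ StrictPullback F G' :=
  ObjectProperty.lift _ (ObjectProperty.ι _ ⋙ (𝟭 A).prod k) fun p =>
    p.property.trans (hk _).symm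

variable {A B : Cat.{u, u}} (f : A ⟶ walkingArrowCat.{u}) (g : B ⟶ walkingArrowCat.{u})

def strictPullbackCone : PullbackCone f g :=
  PullbackCone.mk (W := Cat.of (StrictPullback f.toFunctor g.toFunctor))
    (ObjectProperty.ι _ ⋙ Prod.fst A B).toCatHom (ObjectProperty.ι _ ⋙ Prod.snd A B).toCatHom
    (Cat.ext (functor_ext_of_obj_eq fun p => p.property))

def isLimitStrictPullbackCone : IsLimit (strictPullbackCone f g) :=
  PullbackCone.IsLimit.mk _
    (fun s => (ObjectProperty.lift _ (s.fst.toFunctor.prod' s.snd.toFunctor)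
      fun t => Functor.congr_obj congr(($(s.condition)).toFunctor) t).toCatHom)
    (fun _ => rfl) (fun _ => rfl) fun _ _ h₁ h₂ =>
      Cat.ext (StrictPullback.functor_ext congr(($h₁).toFunctor) congr(($h₂).toFunctor))

end StrictPullback

section Exponential

variable {M : Type*} [Category M] {N : Type*} [Category N]
  {φ : M ⥤ walkingArrowCat.{u}} {ν : N ⥤ walkingArrowCat.{u}}

variable (φ) in
abbrev Fiber (i : walkingArrowCat.{u}) := ObjectProperty.FullSubcategory fun m => φ.obj m = i

abbrev Fiber.cast {i j : walkingArrowCat.{u}} (h : i = j) (a : Fiber φ i) : Fiber φ j :=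
  ⟨a.obj, a.property.trans h⟩

theorem Fiber.exists_factor {i j k : walkingArrowCat.{u}} (f : i ⟶ j) (g : j ⟶ k)
    (a : Fiber φ i) (c : Fiber φ k) (m : a.obj ⟶ c.obj) :
    ∃ (b : Fiber φ j) (m₁ : a.obj ⟶ b.obj) (m₂ : b.obj ⟶ c.obj), m₁ ≫ m₂ = m := by
  obtain h | h := eq_or_eq_of_hom f g
  · exact ⟨a.cast h, 𝟙 _, m, Category.id_comp m⟩
  · exact ⟨c.cast h.symm, m, 𝟙 _, Category.comp_id m⟩

variable (φ ν) in
structure ExpObj where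
  pt : walkingArrowCat.{u}
  F : Fiber φ pt ⥤ N
  obj_over (a : Fiber φ pt) : ν.obj (F.obj a) = pt

variable (φ ν) in
/-- When `A.pt = B.pt` the family `app` is determined by its values at identities, which form a
natural transformation `A.F ⟶ B.F`; otherwise it is a morphism of profunctors. -/
structure ExpHom (A B : ExpObj φ ν) where
  base : A.pt ⟶ B.pt
  app (a : Fiber φ A.pt) (b : Fiber φ B.pt) : (a.obj ⟶ b.obj) → (A.F.obj a ⟶ B.F.obj b)
  app_comp_left {a a' : Fiber φ A.pt} {b : Fiber φ B.pt} (f : a ⟶ a') (m : a'.obj ⟶ b.obj) :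
    app a b (f.hom ≫ m) = A.F.map f ≫ app a' b m
  app_comp_right {a : Fiber φ A.pt} {b b' : Fiber φ B.pt} (m : a.obj ⟶ b.obj) (g : b ⟶ b') :
    app a b' (m ≫ g.hom) = app a b m ≫ B.F.map g

namespace ExpHom

variable {A B C : ExpObj φ ν}

@[ext]
theorem ext {u v : ExpHom φ ν A B} (h : ∀ a b m, u.app a b m = v.app a b m) : u = v := by
  obtain ⟨ub, u, _, _⟩ := u
  obtain ⟨vb, v, _, _⟩ := v
  obtain rfl : ub = vb := Subsingleton.elim _ _
  obtain rfl : u = v := by funext a b m; exact h a b m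
  rfl

def id (A : ExpObj φ ν) : ExpHom φ ν A A where
  base := 𝟙 _
  app _ _ m := A.F.map (ObjectProperty.homMk m)
  app_comp_left _ _ := A.F.map_comp _ _
  app_comp_right _ _ := A.F.map_comp _ _

def compApp (u : ExpHom φ ν A B) (v : ExpHom φ ν B C) (a : Fiber φ A.pt) (c : Fiber φ C.pt)
    (m : a.obj ⟶ c.obj) : A.F.obj a ⟶ C.F.obj c :=
  if h : A.pt = B.pt then u.app a (a.cast h) (𝟙 _) ≫ v.app (a.cast h) c m
  else
    have h' : B.pt = C.pt := (eq_or_eq_of_hom u.base v.base).resolve_left h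
    u.app a (c.cast h'.symm) m ≫ v.app (c.cast h'.symm) c (𝟙 _)

theorem compApp_comp (u : ExpHom φ ν A B) (v : ExpHom φ ν B C) {a : Fiber φ A.pt}
    {b : Fiber φ B.pt} {c : Fiber φ C.pt} (m₁ : a.obj ⟶ b.obj) (m₂ : b.obj ⟶ c.obj) :
    compApp u v a c (m₁ ≫ m₂) = u.app a b m₁ ≫ v.app b c m₂ := by
  unfold compApp
  split_ifs with h
  · have := v.app_comp_left (a := a.cast h) (ObjectProperty.homMk m₁) m₂
    have := u.app_comp_right (b := a.cast h) (𝟙 _) (ObjectProperty.homMk m₁)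
    simp_all
  · have h' : B.pt = C.pt := (eq_or_eq_of_hom u.base v.base).resolve_left h
    have := u.app_comp_right (b' := c.cast h'.symm) m₁ (ObjectProperty.homMk m₂)
    have := v.app_comp_left (a := b) (a' := c.cast h'.symm) (ObjectProperty.homMk m₂) (𝟙 _)
    simp_all

def comp (u : ExpHom φ ν A B) (v : ExpHom φ ν B C) : ExpHom φ ν A C where
  base := u.base ≫ v.base
  app := compApp u v
  app_comp_left {a a' c} f m := by
    obtain ⟨b, m₁, m₂, rfl⟩ := Fiber.exists_factor u.base v.base a' c m
    rw [← Category.assoc, compApp_comp, compApp_comp, u.app_comp_left, Category.assoc]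
  app_comp_right {a c c'} m g := by
    obtain ⟨b, m₁, m₂, rfl⟩ := Fiber.exists_factor u.base v.base a c m
    rw [Category.assoc, compApp_comp, compApp_comp, v.app_comp_right, Category.assoc]

end ExpHom

instance : Category (ExpObj φ ν) where
  Hom := ExpHom φ ν
  id := ExpHom.id
  comp := ExpHom.comp
  id_comp {A _} u := by
    ext a b m
    have h := ExpHom.compApp_comp (ExpHom.id A) u (𝟙 a.obj) m
    rw [Category.id_comp] at h
    refine h.trans ?_
    show A.F.map (𝟙 a) ≫ _ = _
    rw [A.F.map_id, Category.id_comp]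
  comp_id {_ B} u := by
    ext a b m
    have h := ExpHom.compApp_comp u (ExpHom.id B) m (𝟙 b.obj)
    rw [Category.comp_id] at h
    refine h.trans ?_
    show _ ≫ B.F.map (𝟙 b) = _
    rw [B.F.map_id, Category.comp_id]
  assoc u v w := by
    ext a d m
    obtain ⟨b, m₁, m', rfl⟩ := Fiber.exists_factor u.base (v.base ≫ w.base) a d m
    obtain ⟨c, m₂, m₃, rfl⟩ := Fiber.exists_factor v.base w.base b d m'
    have h₁ := ExpHom.compApp_comp (u.comp v) w (m₁ ≫ m₂) m₃
    have h₂ := ExpHom.compApp_comp u (v.comp w) m₁ (m₂ ≫ m₃)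
    rw [Category.assoc] at h₁
    refine h₁.trans (Eq.trans ?_ h₂.symm)
    show ExpHom.compApp u v a c _ ≫ _ = _ ≫ ExpHom.compApp v w b d _
    rw [ExpHom.compApp_comp, ExpHom.compApp_comp, Category.assoc]

namespace ExpHom

variable {A B C : ExpObj φ ν}

theorem id_app (a b : Fiber φ A.pt) (m : a.obj ⟶ b.obj) :
    (𝟙 A : A ⟶ A).app a b m = A.F.map (ObjectProperty.homMk m) :=
  rfl

theorem comp_app (u : A ⟶ B) (v : B ⟶ C) {a : Fiber φ A.pt} {b : Fiber φ B.pt}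
    {c : Fiber φ C.pt} (m₁ : a.obj ⟶ b.obj) (m₂ : b.obj ⟶ c.obj) :
    (u ≫ v).app a c (m₁ ≫ m₂) = u.app a b m₁ ≫ v.app b c m₂ :=
  compApp_comp u v m₁ m₂

theorem eq_eqToHom_comp {A A' B B' : ExpObj φ ν} (hA : A = A') (hB : B = B')
    (u : A ⟶ B) (v : A' ⟶ B')
    (h : ∀ a b m (e₁ : A.F.obj a = A'.F.obj (a.cast (congrArg ExpObj.pt hA)))
      (e₂ : B'.F.obj (b.cast (congrArg ExpObj.pt hB)) = B.F.obj b),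
      u.app a b m = eqToHom e₁ ≫ v.app _ _ m ≫ eqToHom e₂) :
    u = eqToHom hA ≫ v ≫ eqToHom hB.symm := by
  subst hA hB
  refine ext fun a b m => ?_
  simpa using h a b m rfl rfl

end ExpHom

theorem ExpObj.ext {A B : ExpObj φ ν} (h : A.pt = B.pt)
    (hF : ∀ a, A.F.obj a = B.F.obj (a.cast h))
    (hmap : ∀ {a a'} (f : a ⟶ a'), A.F.map f = eqToHom (hF a) ≫
      B.F.map (ObjectProperty.homMk f.hom : a.cast h ⟶ a'.cast h) ≫ eqToHom (hF a').symm) :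
    A = B := by
  obtain ⟨i, F, _⟩ := A
  obtain ⟨j, G, _⟩ := B
  obtain rfl : i = j := h
  obtain rfl : F = G := Functor.ext hF fun _ _ f => hmap f
  rfl

theorem ExpObj.functor_ext {X : Type*} [Category X] {L L' : X ⥤ ExpObj φ ν}
    (hpt : ∀ x, (L.obj x).pt = (L'.obj x).pt)
    (hF : ∀ x a, (L.obj x).F.obj a = (L'.obj x).F.obj (a.cast (hpt x)))
    (happ : ∀ {x y} (f : x ⟶ y) a b m, (L.map f).app a b m = eqToHom (hF x a) ≫
      (L'.map f).app (a.cast (hpt x)) (b.cast (hpt y)) m ≫ eqToHom (hF y b).symm) :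
    L = L' := by
  have hobj x : L.obj x = L'.obj x := ExpObj.ext (hpt x) (hF x) fun f => by
    have := happ (𝟙 x) _ _ f.hom
    simp only [Functor.map_id, ExpHom.id_app] at this
    exact this
  exact Functor.ext hobj fun x y f =>
    ExpHom.eq_eqToHom_comp (hobj x) (hobj y) _ _ fun a b m _ _ => happ f a b m

variable (φ ν) in
def ExpObj.proj : ExpObj φ ν ⥤ walkingArrowCat.{u} where
  obj A := A.pt
  map u := ExpHom.base u

end Exponential

section Currying

variable {M : Type*} [Category M] {N : Type*} [Category N] {X : Type*} [Category X]
  {φ : M ⥤ walkingArrowCat.{u}} {ν : N ⥤ walkingArrowCat.{u}} {χ : X ⥤ walkingArrowCat.{u}}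

def StrictPullback.fiberIncl (x : X) : Fiber φ (χ.obj x) ⥤ StrictPullback φ χ :=
  ObjectProperty.lift _ ((ObjectProperty.ι _).prod' ((Functor.const _).obj x)) fun a => a.property

abbrev StrictPullback.toFiber (p : StrictPullback φ χ) {i : walkingArrowCat.{u}}
    (h : χ.obj p.obj.2 = i) : Fiber φ i :=
  ⟨p.obj.1, p.property.trans h⟩

variable (K : StrictPullback φ χ ⥤ N) (hK : ∀ p, ν.obj (K.obj p) = φ.obj p.obj.1)

def curryObj (x : X) : ExpObj φ ν where
  pt := χ.obj x
  F := StrictPullback.fiberIncl x ⋙ K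
  obj_over a := (hK _).trans a.property

def curryMap {x y : X} (f : x ⟶ y) : ExpHom φ ν (curryObj K hK x) (curryObj K hK y) where
  base := χ.map f
  app _ _ m := K.map (ObjectProperty.homMk (m, f))
  app_comp_left _ _ := by
    refine Eq.trans ?_ (K.map_comp _ _)
    congr 1
    exact ObjectProperty.hom_ext _ (Prod.ext rfl (Category.id_comp f).symm)
  app_comp_right _ _ := by
    refine Eq.trans ?_ (K.map_comp _ _)
    congr 1
    exact ObjectProperty.hom_ext _ (Prod.ext rfl (Category.comp_id f).symm)

def curry : X ⥤ ExpObj φ ν where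
  obj := curryObj K hK
  map := curryMap K hK
  map_id _ := rfl
  map_comp f g := by
    refine ExpHom.ext fun a c m => ?_
    obtain ⟨b, m₁, m₂, rfl⟩ := Fiber.exists_factor (χ.map f) (χ.map g) a c m
    exact (K.map_comp _ _).trans
      (ExpHom.comp_app (curryMap K hK f) (curryMap K hK g) m₁ m₂).symm

variable (L : X ⥤ ExpObj φ ν) (hL : ∀ x, (L.obj x).pt = χ.obj x)

def uncurry : StrictPullback φ χ ⥤ N where
  obj p := (L.obj p.obj.2).F.obj (p.toFiber (hL _).symm)
  map k := (L.map k.hom.2).app _ _ k.hom.1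
  map_id p := by
    show (L.map (𝟙 p.obj.2)).app (p.toFiber _) (p.toFiber _) (𝟙 _) = 𝟙 _
    rw [L.map_id]
    exact (L.obj _).F.map_id _
  map_comp {p q r} k k' := by
    show (L.map (k.hom.2 ≫ k'.hom.2)).app (p.toFiber _) (r.toFiber _) (k.hom.1 ≫ k'.hom.1) = _
    rw [L.map_comp, ExpHom.comp_app (b := q.toFiber (hL _).symm)]

theorem uncurry_obj_over (p : StrictPullback φ χ) :
    ν.obj ((uncurry L hL).obj p) = φ.obj p.obj.1 :=
  ((L.obj _).obj_over _).trans ((hL _).trans p.property.symm)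

theorem uncurry_curry : uncurry (curry K hK) (fun _ => rfl) = K :=
  rfl

theorem curry_uncurry : curry (uncurry L hL) (uncurry_obj_over L hL) = L :=
  ExpObj.functor_ext (fun x => (hL x).symm) (fun _ _ => rfl) fun _ _ _ _ => eq_conj_eqToHom _

end Currying

section Adjunction

variable {M : Cat.{u, u}} (φ : M ⟶ walkingArrowCat.{u})

def strictProd : Over walkingArrowCat.{u} ⥤ Over walkingArrowCat.{u} where
  obj X := Over.mk ((strictPullbackCone φ X.hom).fst ≫ φ)
  map f := Over.homMk
    (StrictPullback.mapRight f.left.toFunctor (Over.w_toFunctor_obj f)).toCatHom rfl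

def strictProdFst : strictProd φ ⟶ (Functor.const _).obj (Over.mk φ) where
  app X := Over.homMk (strictPullbackCone φ X.hom).fst

def strictProdSnd : strictProd φ ⟶ 𝟭 _ where
  app X := Over.homMk (strictPullbackCone φ X.hom).snd (strictPullbackCone φ X.hom).condition.symm

def isLimitStrictProdFan (X : Over walkingArrowCat.{u}) :
    IsLimit (BinaryFan.mk ((strictProdFst φ).app X) ((strictProdSnd φ).app X)) :=
  IsLimit.pullbackConeEquivBinaryFanFunctor (isLimitStrictPullbackCone φ X.hom)

noncomputable def strictProdIsoTensorLeft : strictProd φ ≅ tensorLeft (Over.mk φ) :=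
  CartesianMonoidalCategory.isoTensorLeftOfIsLimit _ _ (isLimitStrictProdFan φ)

def exp (N : Over walkingArrowCat.{u}) : Over walkingArrowCat.{u} :=
  Over.mk (ExpObj.proj φ.toFunctor N.hom.toFunctor).toCatHom

def strictProdHomEquiv (X N : Over walkingArrowCat.{u}) :
    ((strictProd φ).obj X ⟶ N) ≃ (X ⟶ exp φ N) where
  toFun K := Over.homMk (curry K.left.toFunctor (Over.w_toFunctor_obj K)).toCatHom
    (Cat.ext (functor_ext_of_obj_eq fun _ => rfl))
  invFun L := Over.homMk (uncurry L.left.toFunctor (Over.w_toFunctor_obj L)).toCatHom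
    (Cat.ext (functor_ext_of_obj_eq (uncurry_obj_over _ (Over.w_toFunctor_obj L))))
  left_inv K := Over.OverMorphism.ext (Cat.ext (uncurry_curry _ (Over.w_toFunctor_obj K)))
  right_inv L := Over.OverMorphism.ext (Cat.ext (curry_uncurry _ (Over.w_toFunctor_obj L)))

/-- The naturality condition holds by `rfl` because `uncurry` is strictly natural in `X`. -/
def strictProdAdjunction : strictProd φ ⊣ Adjunction.rightAdjointOfEquiv (strictProdHomEquiv φ)
    fun _ _ _ _ _ => (Equiv.eq_symm_apply _).mp rfl :=
  Adjunction.adjunctionOfEquivRight _ _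

end Adjunction

end CategoryTheory.SliceOverArrow

theorem statement4 :
    (∀ (M : Cat.{u, u}) (φ : M ⟶ walkingArrowCat.{u}), CatExponentiable φ) ∧
    Nonempty (MonoidalClosed (Over walkingArrowCat.{u})) := by
  refine ⟨fun M φ => ?_, ⟨⟨fun Z => ?_⟩⟩⟩
  · exact ⟨_, ⟨(SliceOverArrow.strictProdAdjunction φ).ofNatIsoLeft
      (SliceOverArrow.strictProdIsoTensorLeft φ ≪≫
        (Over.pullbackMapIsoTensorLeft φ).symm)⟩⟩
  · exact ⟨_, (SliceOverArrow.strictProdAdjunction Z.hom).ofNatIsoLeft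
      (SliceOverArrow.strictProdIsoTensorLeft Z.hom)⟩
end

section
/- Let M → [1] and N → [1] be functors with fibers M₀, M₁, N₀, N₁, and let F : M₀ ⥤ N₀ and G : M₁ ⥤ N₁ be functors. The set of morphisms F → G in the exponential Fun^{[1]}(M, N) over [1] (the internal hom of Cat/[1]) lying over the unique nonidentity morphism of [1] is naturally isomorphic to the limit of the functor T̃w(M) → M₀ᵒᵖ × M₁ → N₀ᵒᵖ × N₁ → Set, where the middle functor is Fᵒᵖ × G and the last sends (x, y) to N(x, y), and T̃w(M) := (M₀ᵒᵖ × M₁) ×_{Mᵒᵖ × M} Tw(M) is the category of morphisms of M from an object of M₀ to an object of M₁. -/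
/-!
STATEMENT 10: Let `M ⥤ [1]` and `N ⥤ [1]` be functors with fibers
`M₀, M₁, N₀, N₁`, and let `F : M₀ ⥤ N₀` and `G : M₁ ⥤ N₁` be functors.  The
set of morphisms `F ⟶ G` in the internal hom `Fun^{[1]}(M, N)` of `Cat/[1]`
lying over the nonidentity arrow of `[1]` — equivalently, by the universal
property of the exponential, the set of functors `M ⥤ N` over `[1]`
restricting to `F` and `G` on the fibers — is naturally isomorphic to the
limit of the functor `T̃w(M) ⥤ M₀ᵒᵖ × M₁ ⥤ N₀ᵒᵖ × N₁ ⥤ Type`, where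
`T̃w(M) ⊆ Tw(M)` is the category of morphisms of `M` from an object of `M₀`
to an object of `M₁`, the middle functor is `Fᵒᵖ × G`, and the last sends
`(x, y)` to `N(x, y)`.
-/

open CategoryTheory Limits

universe u

variable {M : Type u} [Category.{u} M] {N : Type u} [Category.{u} N]

/-- The fiber of `p : M ⥤ [1]` over `i`. -/
abbrev Fiber {M : Type u} [Category.{u} M] (p : M ⥤ Fin 2) (i : Fin 2) :=
  ObjectProperty.FullSubcategory (fun X => p.obj X = i)

/-- A functor `M ⥤ N` over `[1]` restricting to `F` on the fibers over `0`
and to `G` on the fibers over `1`: a morphism `F ⟶ G` of `Fun^{[1]}(M, N)`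
over the nonidentity arrow of `[1]`. -/
structure RestrictingFunctor (p : M ⥤ Fin 2) (q : N ⥤ Fin 2)
    (F : Fiber p 0 ⥤ Fiber q 0) (G : Fiber p 1 ⥤ Fiber q 1) : Type u where
  H : M ⥤ N
  hw : H ⋙ q = p
  h0 : ∀ X : Fiber p 0, H.obj X.obj = (F.obj X).obj
  h0map : ∀ {X Y : Fiber p 0} (f : X ⟶ Y),
    H.map f.hom =
      eqToHom (h0 X) ≫
        (ObjectProperty.ι _).map (F.map f) ≫ eqToHom (h0 Y).symm
  h1 : ∀ X : Fiber p 1, H.obj X.obj = (G.obj X).obj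
  h1map : ∀ {X Y : Fiber p 1} (f : X ⟶ Y),
    H.map f.hom =
      eqToHom (h1 X) ≫
        (ObjectProperty.ι _).map (G.map f) ≫ eqToHom (h1 Y).symm

/-- The restricted twisted arrow category `T̃w(M)`: morphisms of `M` from an
object of the fiber `M₀` to an object of the fiber `M₁` (a full subcategory
of the twisted arrow category `Tw(M)`, realized as the category of elements
of the `Hom` functor). -/
abbrev RestrictedTw (p : M ⥤ Fin 2) :=
  ObjectProperty.FullSubcategory (fun e : (Functor.hom M).Elements =>
    p.obj e.1.1.unop = 0 ∧ p.obj e.1.2 = 1)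

variable (p : M ⥤ Fin 2)

/-- The source of a restricted twisted arrow, in the fiber `M₀`. -/
def twSrc (e : RestrictedTw p) : Fiber p 0 := ⟨e.obj.1.1.unop, e.property.1⟩

/-- The target of a restricted twisted arrow, in the fiber `M₁`. -/
def twTgt (e : RestrictedTw p) : Fiber p 1 := ⟨e.obj.1.2, e.property.2⟩

/-- The source component of a morphism of restricted twisted arrows. -/
def twMor0 {e e' : RestrictedTw p} (f : e ⟶ e') : twSrc p e' ⟶ twSrc p e :=
  InducedCategory.homMk f.hom.1.1.unop

/-- The target component of a morphism of restricted twisted arrows. -/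
def twMor1 {e e' : RestrictedTw p} (f : e ⟶ e') : twTgt p e ⟶ twTgt p e' :=
  InducedCategory.homMk f.hom.1.2

variable (q : N ⥤ Fin 2) (F : Fiber p 0 ⥤ Fiber q 0) (G : Fiber p 1 ⥤ Fiber q 1)

/-- The integrand `T̃w(M) ⥤ Type`, sending a morphism `u : x ⟶ y` of `M`
(with `x ∈ M₀`, `y ∈ M₁`) to `N(F x, G y)`. -/
def twIntegrand : RestrictedTw p ⥤ Type u where
  obj e := (F.obj (twSrc p e)).obj ⟶ (G.obj (twTgt p e)).obj
  map {e e'} f := TypeCat.ofHom fun φ =>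
    (ObjectProperty.ι _).map (F.map (twMor0 p f)) ≫ φ ≫
      (ObjectProperty.ι _).map (G.map (twMor1 p f))
  map_id e := by
    ext φ
    have h0 : twMor0 p (𝟙 e) = 𝟙 (twSrc p e) := rfl
    have h1 : twMor1 p (𝟙 e) = 𝟙 (twTgt p e) := rfl
    show (ObjectProperty.ι _).map (F.map (twMor0 p (𝟙 e))) ≫ φ ≫
      (ObjectProperty.ι _).map (G.map (twMor1 p (𝟙 e))) = φ
    rw [h0, h1, F.map_id, G.map_id, (ObjectProperty.ι _).map_id,
      (ObjectProperty.ι _).map_id]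
    simp
  map_comp {e e' e''} f g := by
    ext φ
    have h0 : twMor0 p (f ≫ g) = twMor0 p g ≫ twMor0 p f := rfl
    have h1 : twMor1 p (f ≫ g) = twMor1 p f ≫ twMor1 p g := rfl
    show (ObjectProperty.ι _).map (F.map (twMor0 p (f ≫ g))) ≫ φ ≫
      (ObjectProperty.ι _).map (G.map (twMor1 p (f ≫ g))) = _
    rw [h0, h1]
    show _ = (ObjectProperty.ι _).map (F.map (twMor0 p g)) ≫
      ((ObjectProperty.ι _).map (F.map (twMor0 p f)) ≫ φ ≫
        (ObjectProperty.ι _).map (G.map (twMor1 p f))) ≫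
      (ObjectProperty.ι _).map (G.map (twMor1 p g))
    rw [F.map_comp, G.map_comp, (ObjectProperty.ι _).map_comp,
      (ObjectProperty.ι _).map_comp]
    simp

/-! A functor `H : M ⥤ N` over `[1]` restricting to `F` and `G` is determined by its values
`H u : F x ⟶ G y` on the mixed morphisms `u : x ⟶ y`, `x ∈ M₀`, `y ∈ M₁`: every other morphism
lies in a fiber, since `M` has no morphism from `M₁` to `M₀`. Functoriality of `H` on composites
`a ≫ u ≫ b` with `a` in `M₀` and `b` in `M₁` is exactly the compatibility condition of a section
of the integrand over `T̃w(M)`; conversely a section defines such a functor, because a composite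
of two morphisms at least one of which is mixed has that form. Limits in `Type` are sections. -/

open Opposite

section

variable {p q F G}

variable (p) in
lemma obj_eq_zero_or_eq_one (X : M) : p.obj X = 0 ∨ p.obj X = 1 := by
  omega

lemma isEmpty_hom_of_obj_eq_one_of_obj_eq_zero {X Y : M} (hX : p.obj X = 1) (hY : p.obj Y = 0) :
    IsEmpty (X ⟶ Y) :=
  ⟨fun f => absurd (leOfHom (p.map f)) (by rw [hX, hY]; decide)⟩

abbrev fiberHom {i : Fin 2} {X Y : M} (f : X ⟶ Y) (hX : p.obj X = i) (hY : p.obj Y = i) :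
    (⟨X, hX⟩ : Fiber p i) ⟶ ⟨Y, hY⟩ :=
  ObjectProperty.homMk f

@[simp]
lemma fiberHom_id {i : Fin 2} {X : M} (hX : p.obj X = i) : fiberHom (𝟙 X) hX hX = 𝟙 _ :=
  rfl

lemma fiberHom_comp {i : Fin 2} {X Y Z : M} (f : X ⟶ Y) (g : Y ⟶ Z) (hX : p.obj X = i)
    (hY : p.obj Y = i) (hZ : p.obj Z = i) :
    fiberHom (f ≫ g) hX hZ = fiberHom f hX hY ≫ fiberHom g hY hZ :=
  rfl

abbrev twArrow {X Y : M} (u : X ⟶ Y) (hX : p.obj X = 0) (hY : p.obj Y = 1) : RestrictedTw p :=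
  ⟨⟨(op X, Y), u⟩, hX, hY⟩

section OfSection

variable (s : (twIntegrand p q F G).sections)

def sectionAt {X Y : M} (u : X ⟶ Y) (hX : p.obj X = 0) (hY : p.obj Y = 1) :
    (F.obj ⟨X, hX⟩).obj ⟶ (G.obj ⟨Y, hY⟩).obj :=
  s.val (twArrow u hX hY)

lemma sectionAt_comp_comp {X' X Y Y' : M} (a : X' ⟶ X) (u : X ⟶ Y) (b : Y ⟶ Y')
    (hX' : p.obj X' = 0) (hX : p.obj X = 0) (hY : p.obj Y = 1) (hY' : p.obj Y' = 1) :
    sectionAt s (a ≫ u ≫ b) hX' hY' =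
      (F.map (fiberHom a hX' hX)).hom ≫ sectionAt s u hX hY ≫ (G.map (fiberHom b hY hY')).hom :=
  (s.property (ObjectProperty.homMk ⟨(a.op, b), rfl⟩ :
    twArrow u hX hY ⟶ twArrow (a ≫ u ≫ b) hX' hY')).symm

lemma sectionAt_comp_left {X' X Y : M} (a : X' ⟶ X) (u : X ⟶ Y) (hX' : p.obj X' = 0)
    (hX : p.obj X = 0) (hY : p.obj Y = 1) :
    sectionAt s (a ≫ u) hX' hY = (F.map (fiberHom a hX' hX)).hom ≫ sectionAt s u hX hY := by
  simpa using sectionAt_comp_comp s a u (𝟙 Y) hX' hX hY hY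

lemma sectionAt_comp_right {X Y Y' : M} (u : X ⟶ Y) (b : Y ⟶ Y') (hX : p.obj X = 0)
    (hY : p.obj Y = 1) (hY' : p.obj Y' = 1) :
    sectionAt s (u ≫ b) hX hY' = sectionAt s u hX hY ≫ (G.map (fiberHom b hY hY')).hom := by
  simpa using sectionAt_comp_comp s (𝟙 X) u b hX hX hY hY'

variable (F G) in
def fiberwiseObj (X : M) : N :=
  if h : p.obj X = 0 then (F.obj ⟨X, h⟩).obj else (G.obj ⟨X, Fin.eq_one_of_ne_zero _ h⟩).obj

variable (F G) in
lemma fiberwiseObj_of_fiber_zero {X : M} (h : p.obj X = 0) :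
    fiberwiseObj F G X = (F.obj ⟨X, h⟩).obj :=
  dif_pos h

variable (F G) in
lemma fiberwiseObj_of_fiber_one {X : M} (h : p.obj X = 1) :
    fiberwiseObj F G X = (G.obj ⟨X, h⟩).obj :=
  dif_neg (by simp [h])

def sectionMap {X Y : M} (f : X ⟶ Y) : fiberwiseObj F G X ⟶ fiberwiseObj F G Y :=
  if hX : p.obj X = 0 then
    if hY : p.obj Y = 0 then
      eqToHom (fiberwiseObj_of_fiber_zero F G hX) ≫ (F.map (fiberHom f hX hY)).hom ≫
        eqToHom (fiberwiseObj_of_fiber_zero F G hY).symm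
    else
      eqToHom (fiberwiseObj_of_fiber_zero F G hX) ≫
        sectionAt s f hX (Fin.eq_one_of_ne_zero _ hY) ≫
        eqToHom (fiberwiseObj_of_fiber_one F G (Fin.eq_one_of_ne_zero _ hY)).symm
  else
    if hY : p.obj Y = 0 then
      (isEmpty_hom_of_obj_eq_one_of_obj_eq_zero (Fin.eq_one_of_ne_zero _ hX) hY).elim f
    else
      eqToHom (fiberwiseObj_of_fiber_one F G (Fin.eq_one_of_ne_zero _ hX)) ≫
        (G.map (fiberHom f (Fin.eq_one_of_ne_zero _ hX) (Fin.eq_one_of_ne_zero _ hY))).hom ≫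
        eqToHom (fiberwiseObj_of_fiber_one F G (Fin.eq_one_of_ne_zero _ hY)).symm

variable {s}

lemma sectionMap_of_fiber_zero {X Y : M} (f : X ⟶ Y) (hX : p.obj X = 0) (hY : p.obj Y = 0) :
    sectionMap s f = eqToHom (fiberwiseObj_of_fiber_zero F G hX) ≫
      (F.map (fiberHom f hX hY)).hom ≫ eqToHom (fiberwiseObj_of_fiber_zero F G hY).symm := by
  simp [sectionMap, hX, hY]

lemma sectionMap_of_fiber_zero_one {X Y : M} (f : X ⟶ Y) (hX : p.obj X = 0) (hY : p.obj Y = 1) :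
    sectionMap s f = eqToHom (fiberwiseObj_of_fiber_zero F G hX) ≫ sectionAt s f hX hY ≫
      eqToHom (fiberwiseObj_of_fiber_one F G hY).symm := by
  simp [sectionMap, hX, hY]

lemma sectionMap_of_fiber_one {X Y : M} (f : X ⟶ Y) (hX : p.obj X = 1) (hY : p.obj Y = 1) :
    sectionMap s f = eqToHom (fiberwiseObj_of_fiber_one F G hX) ≫
      (G.map (fiberHom f hX hY)).hom ≫ eqToHom (fiberwiseObj_of_fiber_one F G hY).symm := by
  simp [sectionMap, hX, hY]

variable (s)

def functorOfSection : M ⥤ N where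
  obj := fiberwiseObj F G
  map := sectionMap s
  map_id X := by
    obtain hX | hX := obj_eq_zero_or_eq_one p X
    · simp [sectionMap_of_fiber_zero _ hX hX]
    · simp [sectionMap_of_fiber_one _ hX hX]
  map_comp {X Y Z} f g := by
    obtain hX | hX := obj_eq_zero_or_eq_one p X <;>
    obtain hY | hY := obj_eq_zero_or_eq_one p Y <;>
    obtain hZ | hZ := obj_eq_zero_or_eq_one p Z
    · simp [sectionMap_of_fiber_zero _ hX hY, sectionMap_of_fiber_zero _ hY hZ,
        sectionMap_of_fiber_zero _ hX hZ, fiberHom_comp f g hX hY hZ]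
    · simp [sectionMap_of_fiber_zero _ hX hY, sectionMap_of_fiber_zero_one _ hY hZ,
        sectionMap_of_fiber_zero_one _ hX hZ, sectionAt_comp_left s f g hX hY hZ]
    · exact (isEmpty_hom_of_obj_eq_one_of_obj_eq_zero hY hZ).elim g
    · simp [sectionMap_of_fiber_zero_one _ hX hY, sectionMap_of_fiber_one _ hY hZ,
        sectionMap_of_fiber_zero_one _ hX hZ, sectionAt_comp_right s f g hX hY hZ]
    · exact (isEmpty_hom_of_obj_eq_one_of_obj_eq_zero hX hY).elim f
    · exact (isEmpty_hom_of_obj_eq_one_of_obj_eq_zero hX hY).elim f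
    · exact (isEmpty_hom_of_obj_eq_one_of_obj_eq_zero hY hZ).elim g
    · simp [sectionMap_of_fiber_one _ hX hY, sectionMap_of_fiber_one _ hY hZ,
        sectionMap_of_fiber_one _ hX hZ, fiberHom_comp f g hX hY hZ]

end OfSection

namespace RestrictingFunctor

lemma ext {R R' : RestrictingFunctor p q F G} (h : R.H = R'.H) : R = R' := by
  cases R; cases R'; cases h; rfl

variable (R : RestrictingFunctor p q F G)

lemma map_of_fiber_zero {X Y : M} (f : X ⟶ Y) (hX : p.obj X = 0) (hY : p.obj Y = 0) :
    R.H.map f = eqToHom (R.h0 ⟨X, hX⟩) ≫ (F.map (fiberHom f hX hY)).hom ≫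
      eqToHom (R.h0 ⟨Y, hY⟩).symm :=
  R.h0map (fiberHom f hX hY)

lemma map_of_fiber_one {X Y : M} (f : X ⟶ Y) (hX : p.obj X = 1) (hY : p.obj Y = 1) :
    R.H.map f = eqToHom (R.h1 ⟨X, hX⟩) ≫ (G.map (fiberHom f hX hY)).hom ≫
      eqToHom (R.h1 ⟨Y, hY⟩).symm :=
  R.h1map (fiberHom f hX hY)

def mixedMap {X Y : M} (u : X ⟶ Y) (hX : p.obj X = 0) (hY : p.obj Y = 1) :
    (F.obj ⟨X, hX⟩).obj ⟶ (G.obj ⟨Y, hY⟩).obj :=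
  eqToHom (R.h0 ⟨X, hX⟩).symm ≫ R.H.map u ≫ eqToHom (R.h1 ⟨Y, hY⟩)

lemma map_eq_mixedMap {X Y : M} (u : X ⟶ Y) (hX : p.obj X = 0) (hY : p.obj Y = 1) :
    R.H.map u = eqToHom (R.h0 ⟨X, hX⟩) ≫ R.mixedMap u hX hY ≫ eqToHom (R.h1 ⟨Y, hY⟩).symm := by
  simp [mixedMap]

lemma mixedMap_comp_comp {X' X Y Y' : M} (a : X' ⟶ X) (u : X ⟶ Y) (b : Y ⟶ Y')
    (hX' : p.obj X' = 0) (hX : p.obj X = 0) (hY : p.obj Y = 1) (hY' : p.obj Y' = 1) :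
    R.mixedMap (a ≫ u ≫ b) hX' hY' =
      (F.map (fiberHom a hX' hX)).hom ≫ R.mixedMap u hX hY ≫ (G.map (fiberHom b hY hY')).hom := by
  simp [mixedMap, R.map_of_fiber_zero a hX' hX, R.map_of_fiber_one b hY hY']

lemma ext_of_mixedMap {R R' : RestrictingFunctor p q F G}
    (h : ∀ {X Y : M} (u : X ⟶ Y) hX hY, R.mixedMap u hX hY = R'.mixedMap u hX hY) : R = R' := by
  have hobj (X : M) : R.H.obj X = R'.H.obj X := by
    obtain hX | hX := obj_eq_zero_or_eq_one p X
    · rw [R.h0 ⟨X, hX⟩, R'.h0 ⟨X, hX⟩]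
    · rw [R.h1 ⟨X, hX⟩, R'.h1 ⟨X, hX⟩]
  refine ext (CategoryTheory.Functor.ext hobj fun X Y f => ?_)
  obtain hX | hX := obj_eq_zero_or_eq_one p X <;> obtain hY | hY := obj_eq_zero_or_eq_one p Y
  · simp [R.map_of_fiber_zero f hX hY, R'.map_of_fiber_zero f hX hY]
  · simp [R.map_eq_mixedMap f hX hY, R'.map_eq_mixedMap f hX hY, h f hX hY]
  · exact (isEmpty_hom_of_obj_eq_one_of_obj_eq_zero hX hY).elim f
  · simp [R.map_of_fiber_one f hX hY, R'.map_of_fiber_one f hX hY]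

def toSection : (twIntegrand p q F G).sections where
  val e := R.mixedMap e.obj.2 e.property.1 e.property.2
  property {e e'} f :=
    (R.mixedMap_comp_comp (twMor0 p f).hom e.obj.2 (twMor1 p f).hom e'.property.1 e.property.1
      e.property.2 e'.property.2).symm.trans (congrArg (R.mixedMap · _ _) f.hom.2)

lemma toSection_injective : Function.Injective (toSection : RestrictingFunctor p q F G → _) :=
  fun _ _ h => ext_of_mixedMap fun u hX hY => congrArg (·.val (twArrow u hX hY)) h

def ofSection (s : (twIntegrand p q F G).sections) : RestrictingFunctor p q F G where
  H := functorOfSection s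
  hw := by
    refine CategoryTheory.Functor.ext (fun X => ?_) (fun _ _ _ => Subsingleton.elim _ _)
    obtain hX | hX := obj_eq_zero_or_eq_one p X
    · simpa [functorOfSection, fiberwiseObj_of_fiber_zero F G hX, hX] using (F.obj ⟨X, hX⟩).property
    · simpa [functorOfSection, fiberwiseObj_of_fiber_one F G hX, hX] using (G.obj ⟨X, hX⟩).property
  h0 X := fiberwiseObj_of_fiber_zero F G X.property
  h0map f := sectionMap_of_fiber_zero f.hom _ _
  h1 X := fiberwiseObj_of_fiber_one F G X.property
  h1map f := sectionMap_of_fiber_one f.hom _ _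

lemma toSection_ofSection (s : (twIntegrand p q F G).sections) : (ofSection s).toSection = s := by
  refine Subtype.ext (funext fun ⟨⟨⟨⟨X⟩, Y⟩, u⟩, hX, hY⟩ => ?_)
  -- the `eqToHom`s of `mixedMap`, restated through `fiberwiseObj`, so that they cancel
  change eqToHom (fiberwiseObj_of_fiber_zero F G hX).symm ≫ sectionMap s u ≫
    eqToHom (fiberwiseObj_of_fiber_one F G hY) = sectionAt s u hX hY
  simp [sectionMap_of_fiber_zero_one u hX hY]

def equivSections : RestrictingFunctor p q F G ≃ (twIntegrand p q F G).sections where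
  toFun := toSection
  invFun := ofSection
  left_inv R := toSection_injective (toSection_ofSection R.toSection)
  right_inv := toSection_ofSection

end RestrictingFunctor

end

theorem statement10 :
    Nonempty (RestrictingFunctor p q F G ≃ limit (twIntegrand p q F G)) :=
  ⟨RestrictingFunctor.equivSections.trans (Types.limitEquivSections _).symm⟩
end
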